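/- Let D be an integral domain of characteristic zero, and let A, B, w ∈ D[x,y]. Suppose Jac(A,B) is a unit of D[x,y] and Jac(A,w) = 0. Then there exists a nonzero element d ∈ D such that d·w lies in D[A], the D-subalgebra of D[x,y] generated by A. -/

import Mathlib

open MvPolynomial

/-- The Jacobian of two polynomials `p, q ∈ R[x,y]`:
`Jac(p,q) = (∂p/∂x)(∂q/∂y) − (∂p/∂y)(∂q/∂x)`. -/
noncomputable def Jac {R : Type*} [CommRing R]
    (p q : MvPolynomial (Fin 2) R) : MvPolynomial (Fin 2) R :=
  pderiv 0 p * pderiv 1 q - pderiv 1 p * pderiv 0 q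

/-!
Over `K = Frac D` the partials of `A` are coprime, since a common factor divides the unit
`Jac(A,B)`. Hence `Jac(A,w) = 0` forces `∇w = h ∇A` for some `h`; symmetry of second derivatives
gives `Jac(A,h) = 0`, and `deg h < deg w`, so by induction `h = P(A)`. Integrating `P` to `Q`
(characteristic zero), `w - Q(A)` has zero gradient, hence is constant, so `w ∈ K[A]`. Clearing
the denominators of the polynomial expressing `w` in terms of `A` gives `d`.
-/

theorem Polynomial.exists_derivative_eq {K : Type*} [Field K] [CharZero K] (P : Polynomial K) :
    ∃ Q : Polynomial K, Q.derivative = P := by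
  induction P using Polynomial.induction_on' with
  | add p q hp hq =>
    obtain ⟨Qp, rfl⟩ := hp
    obtain ⟨Qq, rfl⟩ := hq
    exact ⟨Qp + Qq, Polynomial.derivative_add⟩
  | monomial n a =>
    refine ⟨Polynomial.monomial (n + 1) (a / (n + 1)), ?_⟩
    rw [Polynomial.derivative_monomial, Nat.add_sub_cancel, Nat.cast_add_one,
      div_mul_cancel₀ _ (Nat.cast_add_one_ne_zero n)]

theorem IsRelPrime.exists_eq_mul_of_mul_eq_mul {R : Type*} [CommMonoidWithZero R]
    [IsCancelMulZero R] [DecompositionMonoid R] {a b x y : R} (hab : IsRelPrime a b)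
    (h : a * y = b * x) :
    ∃ c, x = c * a ∧ y = c * b := by
  rcases eq_or_ne a 0 with rfl | ha
  · obtain ⟨u, rfl⟩ := isRelPrime_zero_left.mp hab
    have hx : x = 0 := by rwa [zero_mul, eq_comm, Units.mul_right_eq_zero] at h
    exact ⟨y * ↑u⁻¹, by simp [hx], by simp [mul_assoc]⟩
  · obtain ⟨c, rfl⟩ := hab.dvd_of_dvd_mul_left ⟨y, h.symm⟩
    refine ⟨c, mul_comm _ _, mul_left_cancel₀ ha ?_⟩
    rw [h, mul_left_comm, mul_comm c]

namespace MvPolynomial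

variable {σ R : Type*}

theorem pderiv_pderiv_comm [CommSemiring R] (i j : σ) (f : MvPolynomial σ R) :
    pderiv i (pderiv j f) = pderiv j (pderiv i f) := by
  classical
  ext m
  simp only [coeff_pderiv, Finsupp.add_apply, add_right_comm m (Finsupp.single i 1)]
  by_cases hij : i = j
  · subst hij; rfl
  · simp only [Finsupp.single_apply, if_neg hij, if_neg (Ne.symm hij), add_zero]
    ring

theorem totalDegree_pderiv_lt [CommSemiring R] {f : MvPolynomial σ R} {i : σ}
    (h : pderiv i f ≠ 0) : (pderiv i f).totalDegree < f.totalDegree := by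
  obtain ⟨m, hm, hmax⟩ :=
    Finset.exists_mem_eq_sup _ (support_nonempty.mpr h) fun s => s.sum fun _ e => e
  rw [mem_support_iff, coeff_pderiv] at hm
  have hle := le_totalDegree (mem_support_iff.mpr (left_ne_zero_of_mul hm))
  rw [totalDegree, hmax]
  simpa only [Finsupp.sum_add_index', Finsupp.sum_single_index, Order.add_one_le_iff,
    implies_true] using hle

theorem eq_C_of_pderiv_eq_zero [CommRing R] [IsAddTorsionFree R] {f : MvPolynomial σ R}
    (h : ∀ i, pderiv i f = 0) : f = C (coeff 0 f) := by
  rw [← coe_inj]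
  refine MvPowerSeries.pderiv.ext (fun i => ?_) ?_
  · simp [MvPowerSeries.pderiv_coe, h]
  · simp only [← MvPowerSeries.coeff_zero_eq_constantCoeff_apply, coeff_coe, coeff_zero_C]

theorem mem_adjoin_of_pderiv_eq_mul {K : Type*} [Field K] [CharZero K]
    {A w h : MvPolynomial σ K} (hh : h ∈ Algebra.adjoin K {A})
    (hw : ∀ i, pderiv i w = h * pderiv i A) : w ∈ Algebra.adjoin K {A} := by
  rw [Algebra.adjoin_singleton_eq_range_aeval, AlgHom.mem_range] at hh ⊢
  obtain ⟨P, rfl⟩ := hh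
  obtain ⟨Q, hQ⟩ := P.exists_derivative_eq
  have hconst : ∀ i, pderiv i (w - Polynomial.aeval A Q) = 0 := fun i => by
    rw [map_sub, Derivation.map_aeval, hQ, hw, smul_eq_mul, sub_self]
  refine ⟨Q + Polynomial.C (coeff 0 (w - Polynomial.aeval A Q)), ?_⟩
  rw [map_add, Polynomial.aeval_C, algebraMap_eq, ← eq_C_of_pderiv_eq_zero hconst,
    add_sub_cancel]

theorem exists_C_mul_mem_adjoin_of_map_mem {D K : Type*} [CommRing D] [Nontrivial D]
    [Field K] [Algebra D K] [IsFractionRing D K] {A w : MvPolynomial σ D}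
    (h : map (algebraMap D K) w ∈ Algebra.adjoin K {map (algebraMap D K) A}) :
    ∃ d : D, d ≠ 0 ∧ C d * w ∈ Algebra.adjoin D {A} := by
  simp only [Algebra.adjoin_singleton_eq_range_aeval, AlgHom.mem_range] at h ⊢
  obtain ⟨P, hP⟩ := h
  obtain ⟨b, hb, hbP⟩ := IsLocalization.integerNormalization_spec (nonZeroDivisors D) P
  refine ⟨b, nonZeroDivisors.ne_zero hb,
    IsLocalization.integerNormalization (nonZeroDivisors D) P,
    map_injective _ (IsFractionRing.injective D K) ?_⟩
  let ψ : MvPolynomial σ D →ₐ[D] MvPolynomial σ K := mapAlgHom (Algebra.ofId D K)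
  change ψ _ = ψ _
  rw [← Polynomial.aeval_algHom_apply, ← Polynomial.aeval_map_algebraMap K (ψ A), hbP,
    C_mul', map_smul ψ, ← algebraMap_smul K b P, map_smul, algebraMap_smul]
  exact congrArg (b • ·) hP

end MvPolynomial

section Jacobian

variable {R : Type*} [CommRing R]

theorem map_jac {S : Type*} [CommRing S] (f : R →+* S) (p q : MvPolynomial (Fin 2) R) :
    map f (Jac p q) = Jac (map f p) (map f q) := by
  simp only [Jac, map_sub, map_mul, pderiv_map]

theorem jac_eq_zero_iff {A w : MvPolynomial (Fin 2) R} :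
    Jac A w = 0 ↔ pderiv 0 A * pderiv 1 w = pderiv 1 A * pderiv 0 w :=
  sub_eq_zero

theorem isRelPrime_pderiv_of_isUnit_jac {A B : MvPolynomial (Fin 2) R}
    (h : IsUnit (Jac A B)) : IsRelPrime (pderiv 0 A) (pderiv 1 A) :=
  fun _ h0 h1 => isUnit_of_dvd_unit (dvd_sub (h0.mul_right _) (h1.mul_right _)) h

theorem jac_eq_zero_of_pderiv_eq_mul {A w h : MvPolynomial (Fin 2) R}
    (hw : ∀ i, pderiv i w = h * pderiv i A) : Jac A h = 0 := by
  have hcomm := pderiv_pderiv_comm 0 1 w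
  rw [hw 0, hw 1, pderiv_mul, pderiv_mul, pderiv_pderiv_comm 0 1 A] at hcomm
  rw [Jac]
  linear_combination -hcomm

end Jacobian

theorem mem_adjoin_of_jac_eq_zero {K : Type*} [Field K] [CharZero K]
    {A w : MvPolynomial (Fin 2) K} (hA : IsRelPrime (pderiv 0 A) (pderiv 1 A))
    (hw : Jac A w = 0) : w ∈ Algebra.adjoin K {A} := by
  obtain ⟨i, hAi⟩ : ∃ i, pderiv i A ≠ 0 := by
    by_contra! h
    rw [h 0, h 1, isRelPrime_zero_left] at hA
    exact not_isUnit_zero hA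
  induction hn : w.totalDegree using Nat.strong_induction_on generalizing w with
  | _ n ih =>
  obtain ⟨h, h0, h1⟩ := hA.exists_eq_mul_of_mul_eq_mul (jac_eq_zero_iff.mp hw)
  have hgrad : ∀ j, pderiv j w = h * pderiv j A := Fin.forall_fin_two.mpr ⟨h0, h1⟩
  refine mem_adjoin_of_pderiv_eq_mul ?_ hgrad
  rcases eq_or_ne h 0 with rfl | hh
  · exact zero_mem _
  have hwi : pderiv i w ≠ 0 := hgrad i ▸ mul_ne_zero hh hAi
  refine ih _ ?_ (jac_eq_zero_of_pderiv_eq_mul hgrad) rfl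
  calc h.totalDegree ≤ (pderiv i w).totalDegree :=
        totalDegree_le_of_dvd_of_isDomain (hgrad i ▸ dvd_mul_right _ _) hwi
    _ < n := hn ▸ totalDegree_pderiv_lt hwi

/-- Over an integral domain `D` of characteristic zero: if `Jac(A,B)` is a unit of
`D[x,y]` and `Jac(A,w) = 0`, then there is a nonzero `d ∈ D` with `d·w ∈ D[A]`. -/
theorem cmw_over_domain_denominator {D : Type*} [CommRing D] [IsDomain D] [CharZero D]
    (A B w : MvPolynomial (Fin 2) D)
    (hAB : IsUnit (Jac A B)) (hAw : Jac A w = 0) :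
    ∃ d : D, d ≠ 0 ∧ (C d) * w ∈ Algebra.adjoin D {A} := by
  let φ := algebraMap D (FractionRing D)
  refine exists_C_mul_mem_adjoin_of_map_mem (K := FractionRing D)
    (mem_adjoin_of_jac_eq_zero ?_ ?_)
  · exact isRelPrime_pderiv_of_isUnit_jac (map_jac φ A B ▸ hAB.map (map φ))
  · rw [← map_jac, hAw, map_zero]
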